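/- If a hypergraph H collapses onto a hypergraph H', then the embedded homology groups are isomorphic: H_*(H;R) ≅ H_*(H';R); moreover H_*(ΔH) ≅ H_*(ΔH') and H_*(δH) ≅ H_*(δH'). -/

import Mathlib

/-- A hypergraph: every hyperedge is a nonempty finite set of vertices. -/
def IsHypergraph {V : Type*} [LinearOrder V] (H : Set (Finset V)) : Prop :=
  ∀ e ∈ H, e.Nonempty

/-- The associated simplicial complex `ΔH`: all nonempty subsets of hyperedges of `H`. -/
def assocSC {V : Type*} [LinearOrder V] (H : Set (Finset V)) : Set (Finset V) :=
  {τ | τ.Nonempty ∧ ∃ σ ∈ H, τ ⊆ σ}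

/-- The lower-associated simplicial complex `δH`. -/
def lowerSC {V : Type*} [LinearOrder V] (H : Set (Finset V)) : Set (Finset V) :=
  {σ | σ ∈ H ∧ ∀ τ : Finset V, τ.Nonempty → τ ⊆ σ → τ ∈ H}

/-- The signed boundary of the basis chain corresponding to a finite set `σ` (with the usual
simplicial signs coming from the linear order on the vertices); vertices map to `0`. -/
noncomputable def bdc {V : Type*} [LinearOrder V] (R : Type*) [CommRing R] (σ : Finset V) :
    Finset V →₀ R :=
  if σ.card ≤ 1 then 0
  else ∑ v ∈ σ, ((-1 : R) ^ ((σ.filter (fun x => x < v)).card)) •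
    Finsupp.single (σ.erase v) (1 : R)

/-- The simplicial boundary operator on the free `R`-module with basis all finite subsets of
`V`. -/
noncomputable def bd {V : Type*} [LinearOrder V] (R : Type*) [CommRing R] :
    (Finset V →₀ R) →ₗ[R] (Finset V →₀ R) :=
  Finsupp.lsum R fun σ => LinearMap.toSpanSingleton R (Finset V →₀ R) (bdc R σ)

/-- `R(H)_n`: the free `R`-module on the `n`-dimensional hyperedges of `H`, as a submodule of
the chains. -/
noncomputable def RHmod {V : Type*} [LinearOrder V] (R : Type*) [CommRing R] (H : Set (Finset V)) (n : ℕ) :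
    Submodule R (Finset V →₀ R) :=
  Submodule.span R {x | ∃ σ ∈ H, σ.card = n + 1 ∧ x = Finsupp.single σ (1 : R)}

/-- The infimum chain complex `Inf_n(R(H)_*) = R(H)_n ⊓ ∂⁻¹(R(H)_{n-1})`. -/
noncomputable def infC {V : Type*} [LinearOrder V] (R : Type*) [CommRing R]
    (H : Set (Finset V)) (n : ℕ) : Submodule R (Finset V →₀ R) :=
  RHmod R H n ⊓ Submodule.comap (bd R) (RHmod R H (n - 1))

/-- The supremum chain complex `Sup_n(R(H)_*) = R(H)_n + ∂(R(H)_{n+1})`. -/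
noncomputable def supC {V : Type*} [LinearOrder V] (R : Type*) [CommRing R]
    (H : Set (Finset V)) (n : ℕ) : Submodule R (Finset V →₀ R) :=
  RHmod R H n ⊔ Submodule.map (bd R) (RHmod R H (n + 1))

/-- The `n`-cycles of the infimum chain complex. -/
noncomputable def cycC {V : Type*} [LinearOrder V] (R : Type*) [CommRing R]
    (H : Set (Finset V)) (n : ℕ) : Submodule R (Finset V →₀ R) :=
  infC R H n ⊓ LinearMap.ker (bd R)

/-- The `n`-th embedded homology of the hypergraph `H` with coefficients in `R`: the homology
of the infimum chain complex, realized as the image of the `n`-cycles in the quotient of the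
chains by the boundaries `∂(Inf_{n+1})`. -/
@[reducible] noncomputable def emH {V : Type*} [LinearOrder V] (R : Type*) [CommRing R]
    (H : Set (Finset V)) (n : ℕ) :=
  ↥(Submodule.map (Submodule.mkQ (Submodule.map (bd R) (infC R H (n + 1)))) (cycC R H n))

/-- A single elementary collapse of `H` onto `H'` removing the free pair `σ < τ`:
`dim τ = dim σ + 1`, `σ` is not a proper subset of any hyperedge of `H` other than `τ`,
every nonempty proper subset of `τ` is a hyperedge of `H`, and `H' = H \\ {σ, τ}`. -/
def IsElemCollapse {V : Type*} [LinearOrder V] (H H' : Set (Finset V))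
    (s t : Finset V) : Prop :=
  s ∈ H ∧ t ∈ H ∧ s ⊂ t ∧ t.card = s.card + 1 ∧
  (∀ ρ ∈ H, s ⊂ ρ → ρ = t) ∧
  (∀ η : Finset V, η.Nonempty → η ⊂ t → η ∈ H) ∧
  H' = H \ {s, t}

/-- `CollapseSeq H H' L`: `H` is transformed into `H'` by the sequence `L` of single
elementary collapses (each list entry records the removed pair). -/
def CollapseSeq {V : Type*} [LinearOrder V] :
    Set (Finset V) → Set (Finset V) → List (Finset V × Finset V) → Prop
  | H, H', [] => H' = H
  | H, H', p :: L => ∃ K : Set (Finset V), IsElemCollapse H K p.1 p.2 ∧ CollapseSeq K H' L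

/-- `H` collapses onto `H'`: a finite sequence of single elementary collapses transforms
`H` into `H'`. -/
def Collapses {V : Type*} [LinearOrder V] (H H' : Set (Finset V)) : Prop :=
  Relation.ReflTransGen (fun A B => ∃ s t : Finset V, IsElemCollapse A B s t) H H'

/-!
Let `s ⋖ t` be the free pair removed by an elementary collapse of `H` onto `H' = H \ {s, t}`, and
let `ε = [t : s] = ±1` be its incidence number (`bdc R t s`). With the homotopy `d x = ε x_s e_t`,
the chain map `r = 1 - ∂d - d∂` satisfies `(r x)_s = x_s - ε² x_s = 0`, and on chains supported on
`H` also `(r x)_t = 0`, because `t` is the only hyperedge containing `s` and so `(∂x)_s = ε x_t`.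
Since all facets of `t` lie in `H`, `r` maps `Inf_*(H)` into `Inf_*(H')`, `d` maps `Inf_*(H)` into
itself, and `r` fixes `Inf_*(H')`: a deformation retraction, hence an isomorphism on embedded
homology. An elementary collapse of `H` is also one of `ΔH` and of `δH`, and the isomorphisms
compose along a sequence of collapses.
-/

section Boundary

open Finset

variable {V : Type*} [LinearOrder V] {R : Type*} [CommRing R]

lemma bd_apply (x : Finset V →₀ R) : bd R x = x.sum fun σ c => c • bdc R σ := by
  rw [bd, Finsupp.lsum_apply]
  rfl

lemma bd_single (σ : Finset V) (c : R) : bd R (Finsupp.single σ c) = c • bdc R σ := by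
  simp [bd_apply]

lemma bdc_of_two_le {σ : Finset V} (h : 2 ≤ #σ) :
    bdc R σ = ∑ v ∈ σ, (-1 : R) ^ #{x ∈ σ | x < v} • Finsupp.single (σ.erase v) 1 := by
  rw [bdc, if_neg (by omega)]

lemma bdc_of_card_le_one {σ : Finset V} (h : #σ ≤ 1) : bdc R σ = 0 := by
  rw [bdc, if_pos h]

lemma bdc_apply_eq_zero {σ ρ : Finset V} (h : ∀ v ∈ σ, σ.erase v ≠ ρ) : bdc R σ ρ = 0 := by
  rcases le_or_gt #σ 1 with hσ | hσ
  · rw [bdc_of_card_le_one hσ, Finsupp.zero_apply]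
  · rw [bdc_of_two_le hσ, Finsupp.finsetSum_apply]
    exact sum_eq_zero fun v hv => by simp [h v hv]

lemma bdc_apply_erase {σ : Finset V} {v : V} (hv : v ∈ σ) (hσ : 2 ≤ #σ) :
    bdc R σ (σ.erase v) = (-1) ^ #{x ∈ σ | x < v} := by
  rw [bdc_of_two_le hσ, Finsupp.finsetSum_apply, sum_eq_single v]
  · simp
  · intro w hw hwv
    simp [(erase_injOn σ).ne hw hv hwv]
  · exact absurd hv

lemma bdc_apply_self (σ : Finset V) : bdc R σ σ = 0 :=
  bdc_apply_eq_zero fun _ hv => (erase_ssubset hv).ne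

/-- The two orders of deleting `v` and `w` from `σ` carry opposite signs; this is why `∂∂ = 0`. -/
lemma neg_one_pow_card_erase_add_swap_eq_zero {σ : Finset V} {v w : V} (hv : v ∈ σ)
    (hw : w ∈ σ) (hvw : v ≠ w) :
    (-1 : R) ^ #{x ∈ σ | x < v} * (-1) ^ #{x ∈ σ.erase v | x < w} +
      (-1) ^ #{x ∈ σ | x < w} * (-1) ^ #{x ∈ σ.erase w | x < v} = 0 := by
  wlog hwv : w < v generalizing v w
  · rw [add_comm]
    exact this hw hv hvw.symm (hvw.lt_or_gt.resolve_right hwv)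
  have h₁ : #{x ∈ σ.erase v | x < w} = #{x ∈ σ | x < w} := by
    rw [filter_erase, erase_eq_of_notMem (s := {x ∈ σ | x < w})
      fun h => lt_asymm (mem_filter.1 h).2 hwv]
  have h₂ : #{x ∈ σ.erase w | x < v} + 1 = #{x ∈ σ | x < v} := by
    rw [filter_erase, card_erase_add_one (mem_filter.2 ⟨hw, hwv⟩)]
  rw [h₁, ← h₂, pow_succ]
  ring

lemma bd_bdc (σ : Finset V) : bd R (bdc R σ) = 0 := by
  rcases le_or_gt #σ 2 with hσ | hσ
  · rcases le_or_gt #σ 1 with h₁ | h₁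
    · rw [bdc_of_card_le_one h₁, map_zero]
    rw [bdc_of_two_le h₁, map_sum]
    refine sum_eq_zero fun v hv => ?_
    rw [map_smul, bd_single, bdc_of_card_le_one (by rw [card_erase_of_mem hv]; omega), smul_zero,
      smul_zero]
  set c : (Σ _ : V, V) → R := fun p =>
    (-1) ^ #{x ∈ σ | x < p.1} * (-1) ^ #{x ∈ σ.erase p.1 | x < p.2}
  calc bd R (bdc R σ)
      = ∑ v ∈ σ, ∑ w ∈ σ.erase v, c ⟨v, w⟩ • Finsupp.single ((σ.erase v).erase w) (1 : R) := by
        rw [bdc_of_two_le hσ.le, map_sum]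
        refine sum_congr rfl fun v hv => ?_
        rw [map_smul, bd_single, one_smul, bdc_of_two_le (by rw [card_erase_of_mem hv]; omega),
          smul_sum]
        simp_rw [smul_smul, c]
    _ = ∑ p ∈ σ.sigma fun v => σ.erase v,
          c p • Finsupp.single ((σ.erase p.1).erase p.2) (1 : R) :=
        (sum_sigma σ (fun v => σ.erase v)
          fun p => c p • Finsupp.single ((σ.erase p.1).erase p.2) (1 : R)).symm
    _ = 0 := by
      refine sum_involution (fun p _ => ⟨p.2, p.1⟩) ?_ ?_ ?_ ?_
      · rintro ⟨v, w⟩ hp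
        obtain ⟨hv, hw⟩ := mem_sigma.1 hp
        rw [erase_right_comm, ← add_smul, neg_one_pow_card_erase_add_swap_eq_zero hv
          (mem_of_mem_erase hw) (ne_of_mem_erase hw).symm, zero_smul]
      · rintro ⟨v, w⟩ hp - h
        exact ne_of_mem_erase (mem_sigma.1 hp).2 (by simpa using congrArg Sigma.fst h)
      · rintro ⟨v, w⟩ hp
        obtain ⟨hv, hw⟩ := mem_sigma.1 hp
        exact mem_sigma.2 ⟨mem_of_mem_erase hw, mem_erase.2 ⟨(ne_of_mem_erase hw).symm, hv⟩⟩
      · intros; rfl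

lemma bd_bd (x : Finset V →₀ R) : bd R (bd R x) = 0 := by
  induction x using Finsupp.induction_linear with
  | zero => simp
  | add f g hf hg => rw [map_add, map_add, hf, hg, add_zero]
  | single σ c => rw [bd_single, map_smul, bd_bdc, smul_zero]

end Boundary

section Chains

open Finset

variable {V : Type*} [LinearOrder V] {R : Type*} [CommRing R] {H K : Set (Finset V)} {n : ℕ}
  {x : Finset V →₀ R}

lemma RHmod_eq_supported (R : Type*) [CommRing R] (H : Set (Finset V)) (n : ℕ) :
    RHmod R H n = Finsupp.supported R R {σ | σ ∈ H ∧ #σ = n + 1} := by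
  rw [RHmod, Finsupp.supported_eq_span_single]
  congr 1
  ext x
  exact ⟨fun ⟨σ, hσ, hc, he⟩ => ⟨σ, ⟨hσ, hc⟩, he.symm⟩,
    fun ⟨σ, ⟨hσ, hc⟩, he⟩ => ⟨σ, hσ, hc, he.symm⟩⟩

lemma mem_RHmod : x ∈ RHmod R H n ↔ ∀ σ, x σ ≠ 0 → σ ∈ H ∧ #σ = n + 1 := by
  rw [RHmod_eq_supported, Finsupp.mem_supported']
  exact forall_congr' fun σ => not_imp_comm

lemma apply_eq_zero_of_mem_RHmod {σ : Finset V} (hx : x ∈ RHmod R H n) (hσ : σ ∉ H) :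
    x σ = 0 :=
  by_contra fun h => hσ (mem_RHmod.1 hx σ h).1

lemma single_mem_RHmod {σ : Finset V} (hσ : σ ∈ H) (hc : #σ = n + 1) (c : R) :
    Finsupp.single σ c ∈ RHmod R H n := by
  rw [RHmod_eq_supported]
  exact Finsupp.single_mem_supported R c ⟨hσ, hc⟩

lemma RHmod_mono (h : K ⊆ H) (n : ℕ) : RHmod R K n ≤ RHmod R H n := by
  simp_rw [RHmod_eq_supported]
  exact Finsupp.supported_mono fun σ hσ => ⟨h hσ.1, hσ.2⟩

lemma mem_RHmod_sdiff_pair {s t : Finset V} :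
    x ∈ RHmod R (H \ {s, t}) n ↔ x ∈ RHmod R H n ∧ x s = 0 ∧ x t = 0 := by
  simp only [mem_RHmod, Set.mem_sdiff, Set.mem_insert_iff, Set.mem_singleton_iff]
  constructor
  · intro h
    exact ⟨fun σ hσ => ⟨(h σ hσ).1.1, (h σ hσ).2⟩, by_contra fun hs => (h s hs).1.2 (.inl rfl),
      by_contra fun ht => (h t ht).1.2 (.inr rfl)⟩
  · rintro ⟨h, hs, ht⟩ σ hσ
    refine ⟨⟨(h σ hσ).1, ?_⟩, (h σ hσ).2⟩
    rintro (rfl | rfl) <;> contradiction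

lemma bdc_mem_RHmod {σ : Finset V} (hfaces : ∀ v ∈ σ, σ.erase v ∈ H) (hc : #σ = n + 2) :
    bdc R σ ∈ RHmod R H n := by
  rw [bdc_of_two_le (by omega)]
  exact sum_mem fun v hv => Submodule.smul_mem _ _ <|
    single_mem_RHmod (hfaces v hv) (by rw [card_erase_of_mem hv]; omega) 1

lemma mem_infC : x ∈ infC R H n ↔ x ∈ RHmod R H n ∧ bd R x ∈ RHmod R H (n - 1) := Iff.rfl

lemma infC_mono (h : K ⊆ H) (n : ℕ) : infC R K n ≤ infC R H n :=
  inf_le_inf (RHmod_mono h n) (Submodule.comap_mono (RHmod_mono h _))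

lemma cycC_mono (h : K ⊆ H) (n : ℕ) : cycC R K n ≤ cycC R H n :=
  inf_le_inf_right _ (infC_mono h n)

end Chains

noncomputable def Submodule.mapMkQEquivOfRetraction {R M : Type*} [CommRing R] [AddCommGroup M]
    [Module R M] {Z Z' B B' : Submodule R M} (ρ : M →ₗ[R] M) (hZ : Z' ≤ Z) (hB : B' ≤ B)
    (hρZ : Z ≤ Z'.comap ρ) (hρB : B ≤ B'.comap ρ) (hfix : ∀ x ∈ Z', ρ x = x)
    (hhtp : ∀ x ∈ Z, ρ x - x ∈ B) :
    Z.map B.mkQ ≃ₗ[R] Z'.map B'.mkQ :=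
  LinearEquiv.ofLinearMap
    ((B.mapQ B' ρ hρB).restrict fun _ ⟨x, hx, hy⟩ => hy ▸ ⟨ρ x, hρZ hx, rfl⟩)
    ((B'.mapQ B LinearMap.id hB).restrict fun _ ⟨x, hx, hy⟩ => hy ▸ ⟨x, hZ hx, rfl⟩)
    (LinearMap.ext fun ⟨_, x, hx, hy⟩ => by
      subst hy
      exact Subtype.ext (by simp [LinearMap.restrict_apply, hfix x hx]))
    (LinearMap.ext fun ⟨_, x, hx, hy⟩ => by
      subst hy
      exact Subtype.ext <| by
        simpa [LinearMap.restrict_apply, Submodule.Quotient.eq] using hhtp x hx)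

section Retraction

open Finset

variable {V : Type*} [LinearOrder V] {R : Type*} [CommRing R] {s t : Finset V}
  {x : Finset V →₀ R}

lemma bdc_apply_mul_self_of_covBy (hst : s ⋖ t) (hs : s.Nonempty) :
    bdc R t s * bdc R t s = 1 := by
  obtain ⟨a, ha, rfl⟩ := hst.exists_finset_erase
  have : 1 ≤ #(t.erase a) := hs.card_pos
  rw [card_erase_of_mem ha] at this
  rw [bdc_apply_erase ha (by omega), ← pow_add]
  exact Even.neg_one_pow ⟨_, rfl⟩

noncomputable def collapseHomotopy (R : Type*) [CommRing R] (s t : Finset V) :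
    (Finset V →₀ R) →ₗ[R] (Finset V →₀ R) :=
  bdc R t s • (Finsupp.lsingle t ∘ₗ Finsupp.lapply s)

noncomputable def collapseRetraction (R : Type*) [CommRing R] (s t : Finset V) :
    (Finset V →₀ R) →ₗ[R] (Finset V →₀ R) :=
  LinearMap.id - bd R ∘ₗ collapseHomotopy R s t - collapseHomotopy R s t ∘ₗ bd R

lemma collapseHomotopy_apply (x : Finset V →₀ R) :
    collapseHomotopy R s t x = Finsupp.single t (bdc R t s * x s) := by
  simp [collapseHomotopy, Finsupp.smul_single]

lemma collapseRetraction_apply (x : Finset V →₀ R) :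
    collapseRetraction R s t x =
      x - bd R (collapseHomotopy R s t x) - collapseHomotopy R s t (bd R x) :=
  rfl

lemma bd_collapseRetraction (x : Finset V →₀ R) :
    bd R (collapseRetraction R s t x) = collapseRetraction R s t (bd R x) := by
  simp only [collapseRetraction_apply, map_sub, bd_bd, map_zero, sub_zero]

lemma collapseRetraction_apply_of_eq_zero (hx : x s = 0) (hbx : bd R x s = 0) :
    collapseRetraction R s t x = x := by
  simp [collapseRetraction_apply, collapseHomotopy_apply, hx, hbx]

lemma collapseRetraction_apply_left (hst : s ⋖ t) (hs : s.Nonempty) (x : Finset V →₀ R) :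
    collapseRetraction R s t x s = 0 := by
  simp only [collapseRetraction_apply, collapseHomotopy_apply, bd_single, Finsupp.sub_apply,
    Finsupp.smul_apply, Finsupp.single_eq_of_ne hst.ne, smul_eq_mul]
  linear_combination (-x s) * bdc_apply_mul_self_of_covBy (R := R) hst hs

lemma collapseRetraction_apply_right (hst : s ⋖ t) (hs : s.Nonempty)
    (hbx : bd R x s = bdc R t s * x t) : collapseRetraction R s t x t = 0 := by
  simp only [collapseRetraction_apply, collapseHomotopy_apply, bd_single, Finsupp.sub_apply,
    Finsupp.smul_apply, Finsupp.single_eq_same, bdc_apply_self, smul_zero, hbx]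
  linear_combination (-x t) * bdc_apply_mul_self_of_covBy (R := R) hst hs

lemma bd_apply_of_forall_ssuperset_eq {H : Set (Finset V)} {n : ℕ}
    (hmax : ∀ ρ ∈ H, s ⊂ ρ → ρ = t) (hx : x ∈ RHmod R H n) :
    bd R x s = bdc R t s * x t := by
  rw [bd_apply, Finsupp.sum_apply, Finsupp.sum, sum_eq_single t]
  · simp [mul_comm]
  · intro σ hσ hσt
    have hσH := (mem_RHmod.1 hx σ (Finsupp.mem_support_iff.1 hσ)).1
    refine smul_eq_zero_of_right _ (bdc_apply_eq_zero fun v hv he => hσt (hmax σ hσH ?_))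
    exact he ▸ erase_ssubset hv
  · intro ht
    rw [Finsupp.notMem_support_iff.1 ht, zero_smul, Finsupp.zero_apply]

end Retraction

namespace IsElemCollapse

open Finset

variable {V : Type*} [LinearOrder V] {R : Type*} [CommRing R] {H H' : Set (Finset V)}
  {s t : Finset V} {n : ℕ} {x : Finset V →₀ R}

lemma left_mem (hcol : IsElemCollapse H H' s t) : s ∈ H := hcol.1

lemma right_mem (hcol : IsElemCollapse H H' s t) : t ∈ H := hcol.2.1

lemma ssubset (hcol : IsElemCollapse H H' s t) : s ⊂ t := hcol.2.2.1

lemma card_right (hcol : IsElemCollapse H H' s t) : #t = #s + 1 := hcol.2.2.2.1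

lemma eq_right_of_ssubset (hcol : IsElemCollapse H H' s t) {ρ : Finset V} (hρ : ρ ∈ H)
    (hsρ : s ⊂ ρ) : ρ = t :=
  hcol.2.2.2.2.1 ρ hρ hsρ

lemma mem_of_ssubset_right (hcol : IsElemCollapse H H' s t) {η : Finset V} (hη : η.Nonempty)
    (hηt : η ⊂ t) : η ∈ H :=
  hcol.2.2.2.2.2.1 η hη hηt

lemma eq_sdiff (hcol : IsElemCollapse H H' s t) : H' = H \ {s, t} := hcol.2.2.2.2.2.2

lemma subset (hcol : IsElemCollapse H H' s t) : H' ⊆ H :=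
  hcol.eq_sdiff ▸ Set.sdiff_subset

lemma covBy (hcol : IsElemCollapse H H' s t) : s ⋖ t :=
  Finset.covBy_iff_card_sdiff_eq_one.2
    ⟨hcol.ssubset.subset, by rw [card_sdiff_of_subset hcol.ssubset.subset, hcol.card_right]; omega⟩

lemma eq_or_eq_of_subset (hcol : IsElemCollapse H H' s t) {ρ : Finset V} (hρ : ρ ∈ H)
    (hsρ : s ⊆ ρ) : ρ = s ∨ ρ = t :=
  (eq_or_ne s ρ).imp Eq.symm fun hne => hcol.eq_right_of_ssubset hρ (hsρ.ssubset_of_ne hne)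

lemma mem_pair_of_subset (hcol : IsElemCollapse H H' s t) {ρ τ : Finset V} (hρ : ρ ∈ H)
    (hτ : τ ∈ ({s, t} : Set (Finset V))) (hτρ : τ ⊆ ρ) : ρ ∈ ({s, t} : Set (Finset V)) := by
  refine hcol.eq_or_eq_of_subset hρ (.trans ?_ hτρ)
  rcases hτ with rfl | rfl
  exacts [subset_rfl, hcol.covBy.le]

lemma bdc_mem_RHmod (hcol : IsElemCollapse H H' s t) (hc : #s = n + 1) :
    bdc R t ∈ RHmod R H n := by
  have hcard := hcol.card_right
  refine _root_.bdc_mem_RHmod (fun v hv => hcol.mem_of_ssubset_right ?_ (erase_ssubset hv))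
    (by omega)
  rw [← card_pos, card_erase_of_mem hv]
  omega

lemma collapseRetraction_mem_RHmod (hcol : IsElemCollapse H H' s t) (hs : s.Nonempty)
    (hx : x ∈ RHmod R H n) : collapseRetraction R s t x ∈ RHmod R H' n := by
  have hbx := bd_apply_of_forall_ssuperset_eq (fun _ => hcol.eq_right_of_ssubset) hx
  rw [hcol.eq_sdiff, mem_RHmod_sdiff_pair]
  refine ⟨?_, collapseRetraction_apply_left hcol.covBy hs x,
    collapseRetraction_apply_right hcol.covBy hs hbx⟩
  rw [collapseRetraction_apply, collapseHomotopy_apply, collapseHomotopy_apply, bd_single, hbx,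
    ← mul_assoc, bdc_apply_mul_self_of_covBy hcol.covBy hs, one_mul]
  refine sub_mem (sub_mem hx ?_) ?_
  · by_cases hxs : x s = 0
    · simp [hxs]
    exact Submodule.smul_mem _ _ (hcol.bdc_mem_RHmod (mem_RHmod.1 hx s hxs).2)
  · by_cases hxt : x t = 0
    · simp [hxt]
    exact single_mem_RHmod (mem_RHmod.1 hx t hxt).1 (mem_RHmod.1 hx t hxt).2 _

lemma collapseRetraction_mem_infC (hcol : IsElemCollapse H H' s t) (hs : s.Nonempty)
    (hx : x ∈ infC R H n) : collapseRetraction R s t x ∈ infC R H' n := by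
  rw [mem_infC, bd_collapseRetraction]
  exact ⟨hcol.collapseRetraction_mem_RHmod hs hx.1, hcol.collapseRetraction_mem_RHmod hs hx.2⟩

lemma collapseHomotopy_mem_infC (hcol : IsElemCollapse H H' s t) (hx : x ∈ infC R H n) :
    collapseHomotopy R s t x ∈ infC R H (n + 1) := by
  rw [collapseHomotopy_apply]
  by_cases hxs : x s = 0
  · simp [hxs]
  have hc := (mem_RHmod.1 hx.1 s hxs).2
  refine ⟨single_mem_RHmod hcol.right_mem (by rw [hcol.card_right, hc]) _, ?_⟩
  change bd R _ ∈ RHmod R H n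
  rw [bd_single]
  exact Submodule.smul_mem _ _ (hcol.bdc_mem_RHmod hc)

lemma collapseRetraction_eq_self (hcol : IsElemCollapse H H' s t) (hx : x ∈ infC R H' n) :
    collapseRetraction R s t x = x := by
  have hs : s ∉ H' := by simp [hcol.eq_sdiff]
  exact collapseRetraction_apply_of_eq_zero (apply_eq_zero_of_mem_RHmod hx.1 hs)
    (apply_eq_zero_of_mem_RHmod hx.2 hs)

variable (R) in
noncomputable def emHEquiv (hcol : IsElemCollapse H H' s t) (hs : s.Nonempty) (n : ℕ) :
    emH R H n ≃ₗ[R] emH R H' n :=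
  Submodule.mapMkQEquivOfRetraction (collapseRetraction R s t) (cycC_mono hcol.subset n)
    (Submodule.map_mono (infC_mono hcol.subset _))
    (fun _ hx => ⟨hcol.collapseRetraction_mem_infC hs hx.1,
      by rw [SetLike.mem_coe, LinearMap.mem_ker, bd_collapseRetraction, hx.2, map_zero]⟩)
    (fun _ ⟨y, hy, hxy⟩ => ⟨_, hcol.collapseRetraction_mem_infC hs hy,
      by rw [bd_collapseRetraction, hxy]⟩)
    (fun _ hx => hcol.collapseRetraction_eq_self hx.1)
    (fun x hx => by
      rw [collapseRetraction_apply, hx.2, map_zero, sub_zero, sub_sub_cancel_left, ← map_neg]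
      exact Submodule.mem_map_of_mem (neg_mem (hcol.collapseHomotopy_mem_infC hx.1)))

lemma assocSC (hcol : IsElemCollapse H H' s t) (hs : s.Nonempty) :
    IsElemCollapse (assocSC H) (assocSC H') s t := by
  refine ⟨⟨hs, s, hcol.left_mem, subset_rfl⟩, ⟨hs.mono hcol.ssubset.subset, t, hcol.right_mem,
    subset_rfl⟩, hcol.ssubset, hcol.card_right, fun ρ ⟨_, σ, hσ, hρσ⟩ hsρ => ?_,
    fun η hη hηt => ⟨hη, t, hcol.right_mem, hηt.subset⟩, ?_⟩
  · have hρt : ρ ⊆ t := hcol.eq_right_of_ssubset hσ (hsρ.trans_subset hρσ) ▸ hρσ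
    exact (hcol.covBy.eq_or_eq hsρ.le hρt).resolve_left hsρ.ne'
  ext ρ
  rw [hcol.eq_sdiff]
  constructor
  · rintro ⟨hρ, σ, ⟨hσ, hσst⟩, hρσ⟩
    exact ⟨⟨hρ, σ, hσ, hρσ⟩, fun hρst => hσst (hcol.mem_pair_of_subset hσ hρst hρσ)⟩
  · rintro ⟨⟨hρ, σ, hσ, hρσ⟩, hρst⟩
    by_cases hσst : σ ∈ ({s, t} : Set (Finset V))
    · have hρt : ρ ⊆ t := by
        rcases hσst with rfl | rfl
        exacts [hρσ.trans hcol.ssubset.subset, hρσ]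
      have hρH := hcol.mem_of_ssubset_right hρ (hρt.ssubset_of_ne fun h => hρst (.inr h))
      exact ⟨hρ, ρ, ⟨hρH, hρst⟩, subset_rfl⟩
    · exact ⟨hρ, σ, ⟨hσ, hσst⟩, hρσ⟩

lemma lowerSC (hcol : IsElemCollapse H H' s t) :
    IsElemCollapse (lowerSC H) (lowerSC H') s t := by
  have hfaces : ∀ τ : Finset V, τ.Nonempty → τ ⊆ t → τ ∈ H := fun τ hτ hτt =>
    (eq_or_ne τ t).elim (· ▸ hcol.right_mem) fun hne =>
      hcol.mem_of_ssubset_right hτ (hτt.ssubset_of_ne hne)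
  refine ⟨⟨hcol.left_mem, fun τ hτ hτs => hfaces τ hτ (hτs.trans hcol.ssubset.subset)⟩,
    ⟨hcol.right_mem, hfaces⟩, hcol.ssubset, hcol.card_right,
    fun ρ hρ => hcol.eq_right_of_ssubset hρ.1,
    fun η hη hηt => ⟨hfaces η hη hηt.subset, fun τ hτ hτη => hfaces τ hτ (hτη.trans hηt.subset)⟩,
    ?_⟩
  ext ρ
  rw [hcol.eq_sdiff]
  constructor
  · rintro ⟨⟨hρ, hρst⟩, hsub⟩
    exact ⟨⟨hρ, fun τ hτ hτρ => (hsub τ hτ hτρ).1⟩, hρst⟩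
  · rintro ⟨⟨hρ, hsub⟩, hρst⟩
    exact ⟨⟨hρ, hρst⟩, fun τ hτ hτρ =>
      ⟨hsub τ hτ hτρ, fun hτst => hρst (hcol.mem_pair_of_subset hρ hτst hτρ)⟩⟩

end IsElemCollapse

lemma Collapses.subset {V : Type*} [LinearOrder V] {H H' : Set (Finset V)}
    (h : Collapses H H') : H' ⊆ H := by
  induction h with
  | refl => exact subset_rfl
  | tail _ hstep ih =>
    obtain ⟨_, _, hcol⟩ := hstep
    exact hcol.subset.trans ih

/-- Collapses preserve the embedded homology: if `H` collapses onto `H'` then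
`H_*(H;R) ≅ H_*(H';R)`, `H_*(ΔH) ≅ H_*(ΔH')` and `H_*(δH) ≅ H_*(δH')`. -/
theorem emH_of_collapses (R : Type*) [CommRing R] {V : Type*} [LinearOrder V]
    (H H' : Set (Finset V)) (hH : IsHypergraph H) (hcol : Collapses H H') :
    ∀ n : ℕ,
      Nonempty (emH R H n ≃ₗ[R] emH R H' n) ∧
      Nonempty (emH R (assocSC H) n ≃ₗ[R] emH R (assocSC H') n) ∧
      Nonempty (emH R (lowerSC H) n ≃ₗ[R] emH R (lowerSC H') n) := by
  intro n
  induction hcol with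
  | refl => exact ⟨⟨.refl R _⟩, ⟨.refl R _⟩, ⟨.refl R _⟩⟩
  | tail hHK hstep ih =>
    obtain ⟨s, t, hcol⟩ := hstep
    have hs : s.Nonempty := hH s (Collapses.subset hHK hcol.left_mem)
    obtain ⟨⟨e₁⟩, ⟨e₂⟩, ⟨e₃⟩⟩ := ih
    exact ⟨⟨e₁ ≪≫ₗ hcol.emHEquiv R hs n⟩, ⟨e₂ ≪≫ₗ (hcol.assocSC hs).emHEquiv R hs n⟩,
      ⟨e₃ ≪≫ₗ hcol.lowerSC.emHEquiv R hs n⟩⟩
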